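/- arXiv:1903.06328 — 7 statements merged into one kernel-verified Lean document; each statement's English description precedes it below -/
import Mathlib

section
/- Let F = {φ₁,...,φ_k} be rational maps of degrees d_i ≥ 2 and let Φ be a sequence of maps from F. Suppose P ∈ P¹(K) is a point whose Φ-orbit has no repeated points (Φ^n(P) ≠ Φ^m(P) for n ≠ m). Then there exist constants κ₁ > 0 and 0 < κ₂ < 1 depending only on d₁,...,d_k such that e_P(Φ^m) ≤ κ₁(κ₂ d₁)^m for all m ≥ 0, where d₁ = min_i d_i. -/
/-!
By the chain rule, `e_P(Φ^m) = ∏_{i<m} e_i` with `e_i` the ramification index of `φ_{w_i}` at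
the `i`-th orbit point. Since the orbit points are distinct, the points at which a fixed `φ_j` is
applied are distinct, so Riemann–Hurwitz gives `∑_i (e_i - 1) ≤ S := ∑_j (2 d_j - 2)`.
As `n ≤ 2^(n-1)`, the index is then bounded uniformly by `2^S`, and
`2^S ≤ 2^S (d₁/2)^m` because `d₁ ≥ 2`: take `κ₁ = 2^S`, `κ₂ = 1/2`.
-/

open scoped BigOperators

/-- `seqComp φ m = φ_{m-1} ∘ ... ∘ φ_0` (with `seqComp φ 0 = id`). -/
def seqComp {X : Type*} (φ : ℕ → X → X) : ℕ → X → X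
  | 0 => id
  | n + 1 => φ n ∘ seqComp φ n

open Finset Function

theorem sum_le_finsum_of_nonneg {X M : Type*} [AddCommMonoid M] [PartialOrder M]
    [IsOrderedAddMonoid M] {f : X → M} (hf : 0 ≤ f) (hfin : (support f).Finite)
    (T : Finset X) : ∑ x ∈ T, f x ≤ ∑ᶠ x, f x := by
  classical
  rw [finsum_eq_sum_of_support_subset f (s := T ∪ hfin.toFinset) (by simp)]
  exact sum_le_sum_of_subset_of_nonneg subset_union_left fun x _ _ => hf x

theorem sum_sub_one_le_of_finsum_le {X : Type*} {r : X → ℕ} (hr : ∀ x, 1 ≤ r x)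
    (hfin : (support fun x => (r x : ℤ) - 1).Finite) {c : ℕ}
    (hc : ∑ᶠ x, ((r x : ℤ) - 1) ≤ c) (T : Finset X) : ∑ x ∈ T, (r x - 1) ≤ c := by
  have hcast : ((∑ x ∈ T, (r x - 1) : ℕ) : ℤ) = ∑ x ∈ T, ((r x : ℤ) - 1) := by
    push_cast [Nat.cast_sub (hr _)]
    rfl
  have hnonneg : 0 ≤ fun x => (r x : ℤ) - 1 := fun x => by
    simp only [Pi.zero_apply, sub_nonneg, Nat.one_le_cast, hr x]
  have := (sum_le_finsum_of_nonneg hnonneg hfin T).trans hc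
  exact_mod_cast hcast ▸ this

theorem sum_comp_injective_le_sum_bounds {α ι X M : Type*} [Fintype ι] [AddCommMonoid M]
    [PartialOrder M] [IsOrderedAddMonoid M] {Q : α → X} (hQ : Injective Q) (w : α → ι)
    (g : ι → X → M) {C : ι → M} (hC : ∀ j (T : Finset X), ∑ x ∈ T, g j x ≤ C j)
    (s : Finset α) : ∑ a ∈ s, g (w a) (Q a) ≤ ∑ j, C j := by
  classical
  rw [← sum_fiberwise s w]
  refine sum_le_sum fun j _ => ?_
  calc ∑ a ∈ s with w a = j, g (w a) (Q a)
      = ∑ a ∈ s with w a = j, g j (Q a) :=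
        sum_congr rfl fun a ha => by rw [(mem_filter.1 ha).2]
    _ = ∑ x ∈ (s.filter (w · = j)).image Q, g j x := (sum_image fun a _ b _ h => hQ h).symm
    _ ≤ C j := hC j _

theorem prod_le_two_pow_sum_sub_one {α : Type*} (s : Finset α) (f : α → ℕ) :
    ∏ i ∈ s, f i ≤ 2 ^ ∑ i ∈ s, (f i - 1) := by
  rw [← prod_pow_eq_pow_sum]
  refine prod_le_prod' fun i _ => ?_
  have := Nat.lt_two_pow_self (n := f i - 1)
  omega

theorem cocycle_seqComp_eq_prod {X M : Type*} [CommMonoid M] {e : (X → X) → X → M}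
    (he_id : ∀ P, e id P = 1) (he_comp : ∀ f g P, e (g ∘ f) P = e f P * e g (f P))
    (φ : ℕ → X → X) (P : X) (n : ℕ) :
    e (seqComp φ n) P = ∏ i ∈ range n, e (φ i) (seqComp φ i P) := by
  induction n with
  | zero => exact he_id P
  | succ n ih => rw [prod_range_succ, ← ih, seqComp, he_comp]

theorem ram_index_orbit_no_repeat_general (k : ℕ) (dd : Fin k → ℕ)
    (hdd : ∀ j, 2 ≤ dd j) :
    ∃ κ₁ κ₂ : ℝ, 0 < κ₁ ∧ 0 < κ₂ ∧ κ₂ < 1 ∧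
      ∀ (X : Type) (φ : Fin k → X → X) (e : (X → X) → X → ℕ),
        (∀ P : X, e id P = 1) →
        (∀ (f g : X → X) (P : X), e (g ∘ f) P = e f P * e g (f P)) →
        (∀ j (x : X), 1 ≤ e (φ j) x) →
        (∀ j, (Function.support fun x : X => ((e (φ j) x : ℤ) - 1)).Finite) →
        (∀ j, (∑ᶠ x : X, ((e (φ j) x : ℤ) - 1)) = 2 * (dd j : ℤ) - 2) →
        ∀ (w : ℕ → Fin k) (P : X),
          Function.Injective (fun n : ℕ => seqComp (fun i => φ (w i)) n P) →
          ∀ m : ℕ, (e (seqComp (fun i => φ (w i)) m) P : ℝ) ≤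
            κ₁ * (κ₂ * (sInf (Set.range fun j => dd j) : ℕ)) ^ m := by
  set S := ∑ j, (2 * dd j - 2)
  refine ⟨2 ^ S, 1 / 2, by positivity, by norm_num, by norm_num, ?_⟩
  intro X φ e he_id he_comp he_one he_fin he_RH w P hinj m
  have : Nonempty (Fin k) := ⟨w 0⟩
  have hd₁ : (2 : ℝ) ≤ (sInf (Set.range fun j => dd j) : ℕ) := by
    exact_mod_cast le_csInf (Set.range_nonempty _) (Set.forall_mem_range.2 hdd)
  have hdefect : ∑ i ∈ range m, (e (φ (w i)) (seqComp (fun i => φ (w i)) i P) - 1) ≤ S :=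
    sum_comp_injective_le_sum_bounds hinj w (fun j x => e (φ j) x - 1)
      (fun j => sum_sub_one_le_of_finsum_le (he_one j) (he_fin j)
        ((he_RH j).trans_le (by have := hdd j; omega))) _
  have hbound : e (seqComp (fun i => φ (w i)) m) P ≤ 2 ^ S := by
    rw [cocycle_seqComp_eq_prod he_id he_comp]
    exact (prod_le_two_pow_sum_sub_one _ _).trans (Nat.pow_le_pow_right two_pos hdefect)
  calc (e (seqComp (fun i => φ (w i)) m) P : ℝ) ≤ 2 ^ S := by exact_mod_cast hbound
    _ ≤ 2 ^ S * (1 / 2 * (sInf (Set.range fun j => dd j) : ℕ)) ^ m :=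
      le_mul_of_one_le_right (by positivity) (one_le_pow₀ (by linarith))

/-- If `P` has a `Φ`-orbit with no repeated points, then there are constants `κ₁ > 0` and
`0 < κ₂ < 1`, depending only on the degrees `d₁,...,d_k`, such that
`e_P(Φ^m) ≤ κ₁ (κ₂ d₁)^m` for all `m ≥ 0`, where `d₁ = min_j d_j`.
The ramification index `e` is axiomatized by multiplicativity and the
Riemann–Hurwitz identity `Σ_Q (e_Q(φ_j) − 1) = 2 d_j − 2` on `ℙ¹`. -/
theorem ram_index_orbit_no_repeat (k : ℕ) (hk : 0 < k) (dd : Fin k → ℕ)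
    (hdd : ∀ j, 2 ≤ dd j) :
    ∃ κ₁ κ₂ : ℝ, 0 < κ₁ ∧ 0 < κ₂ ∧ κ₂ < 1 ∧
      ∀ (X : Type) (φ : Fin k → X → X) (e : (X → X) → X → ℕ),
        (∀ P : X, e id P = 1) →
        (∀ (f g : X → X) (P : X), e (g ∘ f) P = e f P * e g (f P)) →
        (∀ j (x : X), 1 ≤ e (φ j) x) →
        (∀ j, (Function.support fun x : X => ((e (φ j) x : ℤ) - 1)).Finite) →
        (∀ j, (∑ᶠ x : X, ((e (φ j) x : ℤ) - 1)) = 2 * (dd j : ℤ) - 2) →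
        ∀ (w : ℕ → Fin k) (P : X),
          Function.Injective (fun n : ℕ => seqComp (fun i => φ (w i)) n P) →
          ∀ m : ℕ, (e (seqComp (fun i => φ (w i)) m) P : ℝ) ≤
            κ₁ * (κ₂ * (sInf (Set.range fun j => dd j) : ℕ)) ^ m :=
  ram_index_orbit_no_repeat_general k dd hdd
end

section
/- Let v be a place of a number field K and λ_v the logarithmic chordal metric on P¹(C_v). Set l_v = 2 if v is archimedean and l_v = 1 otherwise. For x, y ∈ C_v, if λ_v(x, y) > λ_v(y, ∞) + log l_v, then λ_v(y, ∞) ≤ λ_v(x, y) + log|x − y|_v ≤ 2λ_v(x, y) + log l_v. -/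
/-- The norm used in the chordal metric: Euclidean for archimedean places,
sup norm for nonarchimedean places. -/
noncomputable def chordNorm {F : Type*} [Field F] (av : AbsoluteValue F ℝ)
    (arch : Prop) [Decidable arch] (x y : F) : ℝ :=
  if arch then Real.sqrt (av x ^ 2 + av y ^ 2) else max (av x) (av y)

/-- The logarithmic chordal metric `λ_v = − log ρ_v` on `ℙ¹`. -/
noncomputable def chordLam {F : Type*} [Field F] (av : AbsoluteValue F ℝ)
    (arch : Prop) [Decidable arch] (x₁ y₁ x₂ y₂ : F) : ℝ :=
  - Real.log (av (x₁ * y₂ - x₂ * y₁) / (chordNorm av arch x₁ y₁ * chordNorm av arch x₂ y₂))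

lemma chordNorm_one_le' {F : Type*} [Field F] (av : AbsoluteValue F ℝ)
    (arch : Prop) [Decidable arch] (z : F) : 1 ≤ chordNorm av arch z 1 := by
  unfold chordNorm
  split_ifs
  · rw [map_one]
    have h1 : (1:ℝ) ≤ av z ^ 2 + 1 ^ 2 := by nlinarith [sq_nonneg (av z)]
    calc (1:ℝ) = Real.sqrt 1 := Real.sqrt_one.symm
      _ ≤ _ := Real.sqrt_le_sqrt h1
  · rw [map_one]; exact le_max_right _ _

lemma abs_le_chordNorm' {F : Type*} [Field F] (av : AbsoluteValue F ℝ)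
    (arch : Prop) [Decidable arch] (z : F) : av z ≤ chordNorm av arch z 1 := by
  unfold chordNorm
  split_ifs
  · calc av z = Real.sqrt ((av z) ^ 2) := (Real.sqrt_sq (av.nonneg z)).symm
      _ ≤ _ := Real.sqrt_le_sqrt (by nlinarith)
  · exact le_max_left _ _

lemma chordNorm_le_arch' {F : Type*} [Field F] (av : AbsoluteValue F ℝ)
    (arch : Prop) [Decidable arch] (ha : arch) (z : F) :
    chordNorm av arch z 1 ≤ av z + 1 := by
  unfold chordNorm
  rw [if_pos ha, map_one]
  calc Real.sqrt (av z ^ 2 + 1 ^ 2) ≤ Real.sqrt ((av z + 1) ^ 2) :=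
        Real.sqrt_le_sqrt (by nlinarith [av.nonneg z])
    _ = av z + 1 := Real.sqrt_sq (by positivity)

lemma chordLam_infty' {F : Type*} [Field F] (av : AbsoluteValue F ℝ)
    (arch : Prop) [Decidable arch] (z : F) :
    chordLam av arch z 1 1 0 = Real.log (chordNorm av arch z 1) := by
  have hN : chordNorm av arch (1:F) 0 = 1 := by
    unfold chordNorm
    split_ifs <;> simp
  unfold chordLam
  rw [hN]
  have : av (z * 0 - 1 * 1) = 1 := by
    simp
  rw [this, mul_one]
  rw [one_div, Real.log_inv]
  ring

/-- Let `λ_v` be the logarithmic chordal metric, `l_v = 2` if `v` is archimedean and `1`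
otherwise. For `x, y ∈ ℂ_v`, if `λ_v(x,y) > λ_v(y,∞) + log l_v`, then
`λ_v(y,∞) ≤ λ_v(x,y) + log|x−y|_v ≤ 2 λ_v(x,y) + log l_v`. -/
theorem chordal_distance_estimate {F : Type*} [Field F] (av : AbsoluteValue F ℝ)
    (arch : Prop) [Decidable arch]
    (hna : ¬ arch → ∀ x y : F, av (x + y) ≤ max (av x) (av y))
    (lv : ℝ) (hlv : lv = if arch then 2 else 1)
    (x y : F)
    (h : chordLam av arch x 1 y 1 > chordLam av arch y 1 1 0 + Real.log lv) :
    chordLam av arch y 1 1 0 ≤ chordLam av arch x 1 y 1 + Real.log (av (x - y)) ∧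
      chordLam av arch x 1 y 1 + Real.log (av (x - y)) ≤
        2 * chordLam av arch x 1 y 1 + Real.log lv := by
  set Nx := chordNorm av arch x 1 with hNx
  set Ny := chordNorm av arch y 1 with hNy
  have hNx1 : 1 ≤ Nx := chordNorm_one_le' av arch x
  have hNy1 : 1 ≤ Ny := chordNorm_one_le' av arch y
  have hNx0 : (0:ℝ) < Nx := lt_of_lt_of_le one_pos hNx1
  have hNy0 : (0:ℝ) < Ny := lt_of_lt_of_le one_pos hNy1
  have hlv1 : 1 ≤ lv := by rw [hlv]; split_ifs <;> norm_num
  have hlv0 : (0:ℝ) < lv := lt_of_lt_of_le one_pos hlv1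
  have hinf : chordLam av arch y 1 1 0 = Real.log Ny := chordLam_infty' av arch y
  set d := av (x - y) with hd
  -- x ≠ y
  have hxne : x ≠ y := by
    intro hxy
    have hd0 : d = 0 := by rw [hd, hxy, sub_self, map_zero]
    have : chordLam av arch x 1 y 1 = 0 := by
      unfold chordLam
      have : av (x * 1 - y * 1) = 0 := by rw [hxy]; simp
      rw [this]
      simp
    rw [this, hinf] at h
    have h1 : (0:ℝ) ≤ Real.log Ny := Real.log_nonneg hNy1
    have h2 : (0:ℝ) ≤ Real.log lv := Real.log_nonneg hlv1
    linarith
  have hd0 : 0 < d := by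
    rw [hd]
    exact av.pos (sub_ne_zero.mpr hxne)
  have hxy : chordLam av arch x 1 y 1 = Real.log Nx + Real.log Ny - Real.log d := by
    unfold chordLam
    rw [mul_one, mul_one]
    rw [← hNx, ← hNy, ← hd]
    rw [Real.log_div (ne_of_gt hd0) (by positivity), Real.log_mul (ne_of_gt hNx0) (ne_of_gt hNy0)]
    ring
  -- hypothesis rewritten
  rw [hxy, hinf] at h
  have hkey : Real.log d + Real.log lv < Real.log Nx := by linarith
  have hdlv : d * lv < Nx := by
    have := Real.exp_lt_exp.mpr hkey
    rwa [Real.exp_add, Real.exp_log hd0, Real.exp_log hlv0, Real.exp_log hNx0] at this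
  -- key inequality : d ≤ lv * Ny
  have hdNy : d ≤ lv * Ny := by
    by_cases ha : arch
    · have hlv2 : lv = 2 := by rw [hlv, if_pos ha]
      have h1 : Nx ≤ av x + 1 := chordNorm_le_arch' av arch ha x
      have h2 : av x ≤ d + av y := by
        calc av x = av ((x - y) + y) := by ring_nf
          _ ≤ av (x - y) + av y := av.add_le _ _
          _ = d + av y := by rw [hd]
      have h3 : av y ≤ Ny := abs_le_chordNorm' av arch y
      rw [hlv2] at hdlv ⊢
      nlinarith
    · have hlv1' : lv = 1 := by rw [hlv, if_neg ha]
      have hu := hna ha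
      have h2 : av x ≤ max d (av y) := by
        calc av x = av ((x - y) + y) := by ring_nf
          _ ≤ max (av (x - y)) (av y) := hu _ _
          _ = max d (av y) := by rw [hd]
      have h3 : Nx ≤ max d Ny := by
        rw [hNx]
        unfold chordNorm
        rw [if_neg ha, map_one]
        rw [hNy]
        unfold chordNorm
        rw [if_neg ha, map_one]
        rcases le_total (av x) 1 with h4 | h4
        · simp only [max_le_iff]
          constructor
          · exact le_trans h4 (le_max_of_le_right (le_max_right _ _))
          · exact le_max_of_le_right (le_max_right _ _)
        · rw [max_eq_left h4]
          rcases le_max_iff.mp h2 with h5 | h5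
          · exact le_max_of_le_left h5
          · exact le_max_of_le_right (le_max_of_le_left h5)
      rw [hlv1'] at hdlv ⊢
      rw [mul_one] at hdlv
      rw [one_mul]
      rcases max_cases d Ny with ⟨he, _⟩ | ⟨he, _⟩
      · rw [he] at h3; linarith
      · rw [he] at h3; linarith
  -- d^2 ≤ lv * Nx * Ny
  have hsq : d * d ≤ lv * (Nx * Ny) := by nlinarith
  constructor
  · rw [hxy, hinf]
    have : (0:ℝ) ≤ Real.log Nx := Real.log_nonneg hNx1
    linarith
  · rw [hxy]
    have hlog : Real.log (d * d) ≤ Real.log (lv * (Nx * Ny)) :=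
      Real.log_le_log (by positivity) hsq
    rw [Real.log_mul (ne_of_gt hd0) (ne_of_gt hd0),
        Real.log_mul (ne_of_gt hlv0) (by positivity),
        Real.log_mul (ne_of_gt hNx0) (ne_of_gt hNy0)] at hlog
    linarith
end

section
/- Let X be a projective variety over a number field K with ample line bundle L, let H = {g₁,...,g_k} be morphisms with g_j*L ≅ L^{⊗d_j}, d_j ≥ 2, and let c = max_j c(g_j) where c(g) = sup_x |h_L(g(x))/d_g − h_L(x)|. Then for every bounded sequence f = (f_i) of maps from H there exists a unique canonical height ĥ_f : X(K̄) → R satisfying (i) |ĥ_f(x) − h_L(x)| ≤ 2c(f) for all x, and (ii) ĥ_{S(f)}(f₁(x)) = d_{f₁}·ĥ_f(x), where S is the shift map on sequences. -/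
open Filter Topology

namespace CanonicalHeightAux

variable {X : Type*}

/-- Orbit: apply `f n, f (n+1), ..., f (n+m-1)` to `x`. -/
def orb (f : ℕ → X → X) (n : ℕ) : ℕ → X → X
  | 0, x => x
  | m + 1, x => f (n + m) (orb f n m x)

/-- Product of degrees `d n * ... * d (n+m-1)`. -/
def D (d : ℕ → ℕ) (n m : ℕ) : ℕ := ∏ i ∈ Finset.range m, d (n + i)

lemma orb_shift (f : ℕ → X → X) (n : ℕ) (x : X) :
    ∀ m, orb f (n + 1) m (f n x) = orb f n (m + 1) x := by
  intro m
  induction m with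
  | zero => simp [orb]
  | succ m ih =>
      show f (n + 1 + m) (orb f (n + 1) m (f n x)) = f (n + (m + 1)) (orb f n (m + 1) x)
      rw [ih]; congr 1; omega

lemma D_succ (d : ℕ → ℕ) (n m : ℕ) : D d n (m + 1) = D d n m * d (n + m) :=
  Finset.prod_range_succ _ _

lemma D_shift (d : ℕ → ℕ) (n m : ℕ) : D d n (m + 1) = d n * D d (n + 1) m := by
  rw [D, Finset.prod_range_succ', mul_comm]
  simp only [Nat.add_zero]
  congr 1
  exact Finset.prod_congr rfl fun i _ => by congr 1; omega

lemma two_pow_le_D {d : ℕ → ℕ} (hd : ∀ i, 2 ≤ d i) (n m : ℕ) : 2 ^ m ≤ D d n m := by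
  induction m with
  | zero => simp [D]
  | succ m ih =>
      rw [D_succ, pow_succ]
      exact Nat.mul_le_mul ih (hd _)

lemma D_pos {d : ℕ → ℕ} (hd : ∀ i, 2 ≤ d i) (n m : ℕ) : 0 < (D d n m : ℝ) := by
  have h : (2 : ℝ) ^ m ≤ (D d n m : ℝ) := by exact_mod_cast two_pow_le_D hd n m
  have h2 : (0 : ℝ) < 2 ^ m := by positivity
  linarith

end CanonicalHeightAux

open CanonicalHeightAux

/-- Existence and uniqueness of canonical heights for a bounded sequence of maps:
given a Weil height `h` and a sequence `f = (f_i)` with `|h(f_i(x))/d_i − h(x)| ≤ c`,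
there is a unique family `H n = ĥ_{S^n(f)}` of canonical heights (one for each shift
`S^n(f)` of the sequence) with (i) `|H n x − h x| ≤ 2c` for all `x`, and
(ii) `H (n+1) (f_n x) = d_n · H n x`. -/
theorem canonical_height_exists_unique {X : Type*} (h : X → ℝ)
    (f : ℕ → X → X) (d : ℕ → ℕ) (hd : ∀ i, 2 ≤ d i)
    (c : ℝ) (hc : ∀ i (x : X), |h (f i x) / (d i : ℝ) - h x| ≤ c) :
    ∃! H : ℕ → X → ℝ,
      (∀ n (x : X), |H n x - h x| ≤ 2 * c) ∧
      (∀ n (x : X), H (n + 1) (f n x) = (d n : ℝ) * H n x) := by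
  classical
  rcases isEmpty_or_nonempty X with hX | hX
  · exact ⟨fun _ _ => 0, ⟨fun n x => isEmptyElim x, fun n x => isEmptyElim x⟩,
      fun H' _ => funext fun n => funext fun x => isEmptyElim x⟩
  have hc0 : 0 ≤ c := le_trans (abs_nonneg _) (hc 0 hX.some)
  set a : ℕ → X → ℕ → ℝ := fun n x m => h (orb f n m x) / (D d n m : ℝ) with ha_def
  have hDpos : ∀ n m, 0 < (D d n m : ℝ) := D_pos hd
  have hDge : ∀ n m, (2 : ℝ) ^ m ≤ (D d n m : ℝ) := by
    intro n m
    exact_mod_cast two_pow_le_D hd n m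
  have hdpos : ∀ i, 0 < (d i : ℝ) := fun i => by
    have := hd i; positivity
  -- key geometric estimate
  have key : ∀ n x m, dist (a n x m) (a n x (m + 1)) ≤ c * (1 / 2) ^ m := by
    intro n x m
    have hD := hDpos n m
    have hstep : a n x (m + 1) - a n x m
        = (h (f (n + m) (orb f n m x)) / (d (n + m) : ℝ) - h (orb f n m x)) / (D d n m : ℝ) := by
      have hdn : (d (n + m) : ℝ) ≠ 0 := (hdpos _).ne'
      have hDn : (D d n m : ℝ) ≠ 0 := hD.ne'
      simp only [ha_def]
      rw [show orb f n (m + 1) x = f (n + m) (orb f n m x) from rfl, D_succ]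
      push_cast
      field_simp
    have h1 : dist (a n x m) (a n x (m + 1)) ≤ c / (D d n m : ℝ) := by
      rw [dist_comm, Real.dist_eq, hstep, abs_div, abs_of_pos hD]
      gcongr
      exact hc (n + m) (orb f n m x)
    refine h1.trans ?_
    rw [div_eq_mul_inv, one_div, inv_pow]
    refine mul_le_mul_of_nonneg_left ?_ hc0
    rw [inv_le_inv₀ hD (by positivity)]
    exact hDge n m
  have hcau : ∀ n x, CauchySeq (a n x) :=
    fun n x => cauchySeq_of_le_geometric (1 / 2) c (by norm_num) (key n x)
  set H : ℕ → X → ℝ := fun n x => limUnder atTop (a n x) with hH_def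
  have hten : ∀ n x, Tendsto (a n x) atTop (𝓝 (H n x)) :=
    fun n x => (hcau n x).tendsto_limUnder
  -- property (i)
  have prop1 : ∀ n (x : X), |H n x - h x| ≤ 2 * c := by
    intro n x
    have h0 : a n x 0 = h x := by simp [ha_def, orb, D]
    have := dist_le_of_le_geometric_of_tendsto₀ (1 / 2) c (by norm_num) (key n x) (hten n x)
    rw [h0, dist_comm, Real.dist_eq] at this
    calc |H n x - h x| ≤ c / (1 - 1 / 2) := this
      _ = 2 * c := by ring
  -- property (ii)
  have prop2 : ∀ n (x : X), H (n + 1) (f n x) = (d n : ℝ) * H n x := by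
    intro n x
    have heq : ∀ m, a (n + 1) (f n x) m = (d n : ℝ) * a n x (m + 1) := by
      intro m
      have hdn : (d n : ℝ) ≠ 0 := (hdpos _).ne'
      have hDn : (D d (n + 1) m : ℝ) ≠ 0 := (hDpos _ _).ne'
      simp only [ha_def]
      rw [orb_shift, D_shift]
      push_cast
      field_simp
    have h2 : Tendsto (fun m => (d n : ℝ) * a n x (m + 1)) atTop (𝓝 ((d n : ℝ) * H n x)) :=
      Tendsto.const_mul _ ((hten n x).comp (tendsto_add_atTop_nat 1))
    exact tendsto_nhds_unique (hten (n + 1) (f n x)) (h2.congr fun m => (heq m).symm)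
  refine ⟨H, ⟨prop1, prop2⟩, ?_⟩
  -- uniqueness
  rintro H' ⟨h1', h2'⟩
  funext n x
  -- scaling identities
  have scaleGen : ∀ (G : ℕ → X → ℝ),
      (∀ n (x : X), G (n + 1) (f n x) = (d n : ℝ) * G n x) →
      ∀ m, G (n + m) (orb f n m x) = (D d n m : ℝ) * G n x := by
    intro G hG m
    induction m with
    | zero => simp [orb, D]
    | succ m ih =>
        have : orb f n (m + 1) x = f (n + m) (orb f n m x) := rfl
        rw [show n + (m + 1) = (n + m) + 1 from rfl, this, hG (n + m) (orb f n m x), ih, D_succ]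
        push_cast
        ring
  have hbound : ∀ m : ℕ, |H' n x - H n x| ≤ 4 * c / (2 : ℝ) ^ m := by
    intro m
    have e1 := scaleGen H' h2' m
    have e2 := scaleGen H prop2 m
    set y := orb f n m x
    have hdiff : |(D d n m : ℝ) * H' n x - (D d n m : ℝ) * H n x| ≤ 4 * c := by
      rw [← e1, ← e2]
      calc |H' (n + m) y - H (n + m) y|
          = |(H' (n + m) y - h y) - (H (n + m) y - h y)| := by ring_nf
        _ ≤ |H' (n + m) y - h y| + |H (n + m) y - h y| := abs_sub _ _
        _ ≤ 2 * c + 2 * c := add_le_add (h1' _ _) (prop1 _ _)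
        _ = 4 * c := by ring
    have hD := hDpos n m
    rw [← mul_sub, abs_mul, abs_of_pos hD] at hdiff
    have h4 : |H' n x - H n x| ≤ 4 * c / (D d n m : ℝ) := by
      rw [le_div_iff₀ hD, mul_comm]
      exact hdiff
    refine h4.trans ?_
    exact div_le_div_of_nonneg_left (by linarith) (by positivity) (hDge n m)
  have hlim : Tendsto (fun m : ℕ => 4 * c / (2 : ℝ) ^ m) atTop (𝓝 0) := by
    have h5 := (tendsto_pow_atTop_nhds_zero_of_lt_one
      (by norm_num : (0:ℝ) ≤ 1/2) (by norm_num : (1:ℝ)/2 < 1)).const_mul (4 * c)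
    simp only [mul_zero] at h5
    refine h5.congr fun m => ?_
    rw [div_pow, one_pow]; ring
  have hle : |H' n x - H n x| ≤ 0 := ge_of_tendsto' hlim hbound
  have hz : H' n x - H n x = 0 := abs_eq_zero.mp (le_antisymm hle (abs_nonneg _))
  linarith
end

section
/- Let f = (f_i) be a bounded sequence of self-maps of a projective variety X with ample line bundle L, each satisfying f_i*L ≅ L^{⊗d_i} with d_i ≥ 2. Then the canonical height ĥ_f satisfies ĥ_f(x) ≥ 0 for all x ∈ X(K̄), and ĥ_f(x) = 0 if and only if x is f-preperiodic (i.e., the forward orbit {x, f₁(x), f₂(f₁(x)),...} is finite). -/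
/-- For a bounded sequence `f = (f_i)` with ample height `h` (satisfying Northcott),
the canonical height `ĥ_f = H 0` (characterized by `|H n − h| ≤ 2c` and
`H (n+1) ∘ f_n = d_n · H n`) satisfies `ĥ_f(x) ≥ 0` for all `x`, and `ĥ_f(x) = 0`
if and only if `x` is `f`-preperiodic (its forward orbit is finite). -/
theorem canonical_height_nonneg_and_zero_iff_preperiodic {X : Type*} (h : X → ℝ)
    (f : ℕ → X → X) (d : ℕ → ℕ) (hd : ∀ i, 2 ≤ d i)
    (c : ℝ) (hc : ∀ i (x : X), |h (f i x) / (d i : ℝ) - h x| ≤ c)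
    (hNorthcott : ∀ C : ℝ, {x : X | h x ≤ C}.Finite)
    (H : ℕ → X → ℝ)
    (hH1 : ∀ n (x : X), |H n x - h x| ≤ 2 * c)
    (hH2 : ∀ n (x : X), H (n + 1) (f n x) = (d n : ℝ) * H n x) :
    ∀ x : X, 0 ≤ H 0 x ∧ (H 0 x = 0 ↔ (Set.range fun n => seqComp f n x).Finite) := by
  intro x
  set P : ℕ → ℝ := fun n => ∏ i ∈ Finset.range n, (d i : ℝ) with hP
  have key : ∀ n, H n (seqComp f n x) = P n * H 0 x := by
    intro n
    induction n with
    | zero => simp [seqComp, hP]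
    | succ n ih =>
      show H (n + 1) (f n (seqComp f n x)) = _
      rw [hH2, ih, hP]
      simp only [Finset.prod_range_succ]
      ring
  have hPge : ∀ n, (2 : ℝ) ^ n ≤ P n := by
    intro n
    calc (2 : ℝ) ^ n = ∏ _i ∈ Finset.range n, (2 : ℝ) := by simp
    _ ≤ P n := Finset.prod_le_prod (by intros; norm_num)
        (fun i _ => by exact_mod_cast hd i)
  have hP1 : ∀ n, (1 : ℝ) ≤ P n := by
    intro n
    have h2 : (1 : ℝ) ≤ 2 ^ n := one_le_pow₀ (by norm_num : (1:ℝ) ≤ 2)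
    linarith [hPge n]
  have hub : ∀ n, h (seqComp f n x) ≤ P n * H 0 x + 2 * c := by
    intro n
    have := (abs_le.mp (hH1 n (seqComp f n x))).1
    rw [key n] at this; linarith
  have hlb : ∀ n, P n * H 0 x - 2 * c ≤ h (seqComp f n x) := by
    intro n
    have := (abs_le.mp (hH1 n (seqComp f n x))).2
    rw [key n] at this; linarith
  have hnonneg : 0 ≤ H 0 x := by
    by_contra hneg
    push_neg at hneg
    -- orbit lies in the finite set {y | h y ≤ 2c}
    have hfin := hNorthcott (2 * c)
    have hBdd : BddBelow (h '' {y : X | h y ≤ 2 * c}) := (hfin.image h).bddBelow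
    obtain ⟨B, hB⟩ := hBdd
    have hmem : ∀ n, h (seqComp f n x) ≤ 2 * c := by
      intro n
      have : P n * H 0 x ≤ 1 * H 0 x :=
        mul_le_mul_of_nonpos_right (hP1 n) (le_of_lt hneg)
      have := hub n
      nlinarith [hP1 n]
    obtain ⟨n, hn⟩ := pow_unbounded_of_one_lt ((2 * c - B) / (-(H 0 x)))
      (by norm_num : (1:ℝ) < 2)
    have hBle : B ≤ h (seqComp f n x) := hB ⟨seqComp f n x, hmem n, rfl⟩
    have h2n : P n * H 0 x ≤ (2:ℝ) ^ n * H 0 x :=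
      mul_le_mul_of_nonpos_right (hPge n) (le_of_lt hneg)
    have hdiv : (2 * c - B) < (2:ℝ) ^ n * (-(H 0 x)) := by
      have hpos : (0:ℝ) < -(H 0 x) := by linarith
      calc (2 * c - B) = ((2 * c - B) / (-(H 0 x))) * (-(H 0 x)) :=
            (div_mul_cancel₀ _ (ne_of_gt hpos)).symm
        _ < (2:ℝ) ^ n * (-(H 0 x)) := mul_lt_mul_of_pos_right hn hpos
    have := hub n
    nlinarith
  refine ⟨hnonneg, ?_, ?_⟩
  · intro h0
    have : (Set.range fun n => seqComp f n x) ⊆ {y : X | h y ≤ 2 * c} := by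
      rintro _ ⟨n, rfl⟩
      have := hub n
      rw [h0] at this
      simpa using this
    exact (hNorthcott (2 * c)).subset this
  · intro hfin
    by_contra h0
    have hpos : 0 < H 0 x := lt_of_le_of_ne hnonneg (Ne.symm h0)
    have hBdd : BddAbove (h '' Set.range fun n => seqComp f n x) :=
      (hfin.image h).bddAbove
    obtain ⟨B, hB⟩ := hBdd
    obtain ⟨n, hn⟩ := pow_unbounded_of_one_lt ((B + 2 * c) / H 0 x)
      (by norm_num : (1:ℝ) < 2)
    have hBle : h (seqComp f n x) ≤ B := hB ⟨seqComp f n x, ⟨n, rfl⟩, rfl⟩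
    have h2n : (2:ℝ) ^ n * H 0 x ≤ P n * H 0 x :=
      mul_le_mul_of_nonneg_right (hPge n) (le_of_lt hpos)
    have hdiv : B + 2 * c < (2:ℝ) ^ n * H 0 x := by
      calc B + 2 * c = ((B + 2 * c) / H 0 x) * H 0 x :=
            (div_mul_cancel₀ _ (ne_of_gt hpos)).symm
        _ < (2:ℝ) ^ n * H 0 x := mul_lt_mul_of_pos_right hn hpos
    have := hlb n
    linarith
end

section
/- Let H = {g₁,...,g_k} be self-maps of a projective variety X over K with g_j*L ≅ L^{⊗d_j}, d_j ≥ 2, L ample. Then for any positive integer D, the set of points x ∈ X(K̄) with [K(x):K] ≤ D that are preperiodic for some sequence of maps drawn from H is finite. -/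
lemma two_mul_sub_le_of_abs_div_sub_le {a b c d : ℝ} (hd : 2 ≤ d) (hc : |b / d - a| ≤ c)
    (ha : 2 * c ≤ a) : 2 * a - 2 * c ≤ b := by
  have hc0 : 0 ≤ c := (abs_nonneg _).trans hc
  have hdiv : a - c ≤ b / d := by linarith [(abs_le.1 hc).1]
  calc 2 * a - 2 * c = 2 * (a - c) := by ring
    _ ≤ d * (a - c) := by gcongr; linarith
    _ ≤ b := by rwa [mul_comm, ← le_div_iff₀ (by linarith)]

section Escape

variable {u : ℕ → ℝ} {c : ℝ}

lemma add_mul_le_of_two_mul_sub_le (h0 : 2 * c ≤ u 0)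
    (hstep : ∀ n, 2 * c ≤ u n → 2 * u n - 2 * c ≤ u (n + 1)) (n : ℕ) :
    u 0 + n * (u 0 - 2 * c) ≤ u n := by
  induction n with
  | zero => simp
  | succ n ih =>
    have hn : u 0 ≤ u n := by nlinarith
    push_cast
    linarith [hstep n (h0.trans hn)]

lemma not_bddAbove_range_of_two_mul_sub_le (h0 : 2 * c < u 0)
    (hstep : ∀ n, 2 * c ≤ u n → 2 * u n - 2 * c ≤ u (n + 1)) :
    ¬ BddAbove (Set.range u) := by
  rintro ⟨M, hM⟩
  obtain ⟨n, hn⟩ := exists_nat_gt ((M - u 0) / (u 0 - 2 * c))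
  have hn' := (div_lt_iff₀ (sub_pos.2 h0)).1 hn
  linarith [hM ⟨n, rfl⟩, add_mul_le_of_two_mul_sub_le h0.le hstep n]

end Escape

theorem finite_preperiodic_points_semigroup_general {X : Type*} (k : ℕ)
    (h : X → ℝ) (degK : X → ℕ)
    (g : Fin k → X → X) (d : Fin k → ℕ) (hd : ∀ j, 2 ≤ d j)
    (c : ℝ) (hc : ∀ j (x : X), |h (g j x) / (d j : ℝ) - h x| ≤ c)
    (D : ℕ)
    (hNorthcott : ∀ C : ℝ, {x : X | degK x ≤ D ∧ h x ≤ C}.Finite) :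
    {x : X | degK x ≤ D ∧
      ∃ w : ℕ → Fin k, (Set.range fun n => seqComp (fun i => g (w i)) n x).Finite}.Finite := by
  refine (hNorthcott (2 * c)).subset ?_
  rintro x ⟨hdeg, w, hfin⟩
  refine ⟨hdeg, not_lt.1 fun hx => ?_⟩
  have hbdd : BddAbove (Set.range fun n => h (seqComp (fun i => g (w i)) n x)) := by
    rw [Set.range_comp' h]
    exact (hfin.image h).bddAbove
  refine not_bddAbove_range_of_two_mul_sub_le hx (fun n hn => ?_) hbdd
  exact two_mul_sub_le_of_abs_div_sub_le (by exact_mod_cast hd (w n)) (hc (w n) _) hn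

/-- For self-maps `g₁,...,g_k` of a projective variety with `g_j*L ≅ L^{⊗d_j}`, `d_j ≥ 2`,
`L` ample (encoded by the height bound and the Northcott property in bounded degree),
and any `D ≥ 1`, the set of points of degree at most `D` over `K` that are preperiodic
for some sequence of maps drawn from `{g₁,...,g_k}` is finite. -/
theorem finite_preperiodic_points_semigroup {X : Type*} (k : ℕ) (hk : 0 < k)
    (h : X → ℝ) (degK : X → ℕ)
    (g : Fin k → X → X) (d : Fin k → ℕ) (hd : ∀ j, 2 ≤ d j)
    (c : ℝ) (hc : ∀ j (x : X), |h (g j x) / (d j : ℝ) - h x| ≤ c)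
    (D : ℕ) (hD : 0 < D)
    (hNorthcott : ∀ C : ℝ, {x : X | degK x ≤ D ∧ h x ≤ C}.Finite) :
    {x : X | degK x ≤ D ∧
      ∃ w : ℕ → Fin k, (Set.range fun n => seqComp (fun i => g (w i)) n x).Finite}.Finite :=
  finite_preperiodic_points_semigroup_general k h degK g d hd c hc D hNorthcott
end

section
/- Let ν be the measure on J = {1,...,k} assigning mass d_j/(d₁+...+d_k) to j, and μ = ∏_{i=1}^∞ ν the product measure on W = J^∞. Then for the dynamical eigensystem (X, g₁,...,g_k, L) with g_j*L ≅ L^{⊗d_j}, the Kawaguchi canonical height satisfies ĥ_H(x) = ∫_W ĥ_{f_w}(x) dμ(w) for all x ∈ X(K̄). In particular |ĥ_H(x) − h_L(x)| ≤ 4c with c = max_j c(g_j). -/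
/-!
Both sides are limits of the averages `D⁻ⁿ ∑_{|v| = n} h (g_v x)` over words of length `n`,
where `D = ∑ d_j`. Iterating the functional equation gives `ĥ_H = D⁻ⁿ ∑_v ĥ_H ∘ g_v`, and since
`k ≤ D / 2` the error `ĥ_H - h = O(1)` is damped by `2⁻ⁿ`. On the other side, telescoping
`ĥ_{f_{σw}} ∘ g_{w_0} = d_{w_0} ĥ_{f_w}` puts `ĥ_{f_w}(x)` within `2c / 2ⁿ` of
`h (g_{w|n} x) / ∏_{i<n} d_{w_i}`, a function of the first `n` letters whose `μ`-integral is exactly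
the same average, because the cylinder of `v` has mass `∏ d_{v_i} / Dⁿ`.
-/

open MeasureTheory Filter Topology

theorem tendsto_of_abs_sub_le_div_two_pow {u : ℕ → ℝ} {a B : ℝ}
    (h : ∀ n, |u n - a| ≤ B / 2 ^ n) : Tendsto u atTop (𝓝 a) := by
  have hB : Tendsto (fun n : ℕ => B / 2 ^ n) atTop (𝓝 0) := by
    simpa [div_eq_mul_inv] using (tendsto_pow_atTop_nhds_zero_of_lt_one
      (r := (2 : ℝ)⁻¹) (by norm_num) (by norm_num)).const_mul B
  exact tendsto_iff_norm_sub_tendsto_zero.2 (squeeze_zero_norm (fun n => by simpa using h n) hB)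

theorem abs_integral_sub_le {α : Type*} [MeasurableSpace α] {μ : Measure α}
    [IsProbabilityMeasure μ] {f : α → ℝ} (hf : Integrable f μ) {a B : ℝ}
    (hfa : ∀ w, |f w - a| ≤ B) : |∫ w, f w ∂μ - a| ≤ B := by
  have := norm_integral_le_of_norm_le_const (μ := μ)
    (ae_of_all _ fun w => (Real.norm_eq_abs _).trans_le (hfa w))
  rwa [Real.norm_eq_abs, integral_sub hf (integrable_const a), integral_const, probReal_univ,
    one_smul, mul_one] at this

section

variable {X ι : Type*}

def applyWord (g : ι → X → X) : (n : ℕ) → (Fin n → ι) → X → X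
  | 0, _, x => x
  | n + 1, v, x => applyWord g n (Fin.tail v) (g (v 0) x)

section Words

variable [Fintype ι] (g : ι → X → X)

theorem sum_applyWord_succ {M : Type*} [AddCommMonoid M] (φ : X → M) (n : ℕ) (x : X) :
    ∑ v : Fin (n + 1) → ι, φ (applyWord g (n + 1) v x) =
      ∑ j, ∑ v : Fin n → ι, φ (applyWord g n v (g j x)) := by
  rw [← (Fin.consEquiv fun _ => ι).sum_comp, Fintype.sum_prod_type]
  rfl

theorem sum_applyWord_eq_pow_mul {R : Type*} [CommSemiring R] {H : X → R} {D : R}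
    (hH : ∀ x, ∑ j, H (g j x) = D * H x) (n : ℕ) (x : X) :
    ∑ v : Fin n → ι, H (applyWord g n v x) = D ^ n * H x := by
  induction n generalizing x with
  | zero => simp [applyWord]
  | succ n ih => simp only [sum_applyWord_succ, ih, ← Finset.mul_sum, hH]; ring

theorem abs_sum_applyWord_div_pow_sub_le [Nonempty ι] {H h : X → ℝ} {D C : ℝ}
    (hD : 2 * Fintype.card ι ≤ D) (hHh : ∀ x, |H x - h x| ≤ C)
    (hH : ∀ x, ∑ j, H (g j x) = D * H x) (n : ℕ) (x : X) :
    |(∑ v : Fin n → ι, h (applyWord g n v x)) / D ^ n - H x| ≤ C / 2 ^ n := by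
  have hcard : (0 : ℝ) < Fintype.card ι := by exact_mod_cast Fintype.card_pos
  have hDn : 0 < D ^ n := pow_pos (by linarith) n
  have hC : 0 ≤ C := (abs_nonneg _).trans (hHh x)
  have hsum : |∑ v : Fin n → ι, (h - H) (applyWord g n v x)| ≤ Fintype.card ι ^ n * C := by
    calc _ ≤ ∑ v : Fin n → ι, |(h - H) (applyWord g n v x)| := Finset.abs_sum_le_sum_abs _ _
      _ ≤ ∑ _v : Fin n → ι, C := Finset.sum_le_sum fun v _ => by
          rw [Pi.sub_apply, abs_sub_comm]; exact hHh _
      _ = Fintype.card ι ^ n * C := by simp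
  have hrw : (∑ v : Fin n → ι, h (applyWord g n v x)) / D ^ n - H x
      = (∑ v : Fin n → ι, (h - H) (applyWord g n v x)) / D ^ n := by
    simp only [Pi.sub_apply, Finset.sum_sub_distrib, sum_applyWord_eq_pow_mul g hH]
    field_simp
  rw [hrw, abs_div, abs_of_pos hDn, div_le_div_iff₀ hDn (by positivity)]
  calc _ ≤ Fintype.card ι ^ n * C * 2 ^ n := by gcongr
    _ = C * (2 * Fintype.card ι) ^ n := by ring
    _ ≤ C * D ^ n := by gcongr

end Words

section Sequences

variable {g : ι → X → X} {d : ι → ℝ} {H : (ℕ → ι) → X → ℝ} {h : X → ℝ} {B : ℝ}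

theorem shift_applyWord_eq_prod_mul
    (hH : ∀ w x, H (fun i => w (i + 1)) (g (w 0) x) = d (w 0) * H w x)
    (n : ℕ) (w : ℕ → ι) (x : X) :
    H (fun i => w (i + n)) (applyWord g n (fun i => w i) x) = (∏ i : Fin n, d (w i)) * H w x := by
  induction n generalizing w x with
  | zero => simp [applyWord]
  | succ n ih =>
    change H (fun i => w (i + n + 1)) (applyWord g n (fun i => w (i + 1)) (g (w 0) x)) = _
    rw [Fin.prod_univ_succ]
    simp only [Fin.val_succ, Fin.val_zero]
    rw [ih (fun i => w (i + 1)), hH]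
    ring

theorem abs_div_prod_prefix_sub_le (hd : ∀ j, 2 ≤ d j) (hHh : ∀ w x, |H w x - h x| ≤ B)
    (hH : ∀ w x, H (fun i => w (i + 1)) (g (w 0) x) = d (w 0) * H w x)
    (n : ℕ) (w : ℕ → ι) (x : X) :
    |h (applyWord g n (fun i => w i) x) / ∏ i : Fin n, d (w i) - H w x| ≤ B / 2 ^ n := by
  have h2n : (2 : ℝ) ^ n ≤ ∏ i : Fin n, d (w i) := by
    simpa using Finset.prod_le_prod (s := Finset.univ) (f := fun _ : Fin n => (2 : ℝ))
      (fun _ _ => zero_le_two) fun i _ => hd (w i)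
  have hP : 0 < ∏ i : Fin n, d (w i) := lt_of_lt_of_le (by positivity) h2n
  have hrw : h (applyWord g n (fun i => w i) x) / ∏ i : Fin n, d (w i) - H w x
      = (h (applyWord g n (fun i => w i) x)
          - H (fun i => w (i + n)) (applyWord g n (fun i => w i) x)) / ∏ i : Fin n, d (w i) := by
    rw [shift_applyWord_eq_prod_mul hH]; field_simp
  rw [hrw, abs_div, abs_of_pos hP, abs_sub_comm]
  exact div_le_div₀ ((abs_nonneg _).trans (hHh w x)) (hHh _ _) (by positivity) h2n

theorem tendsto_div_prod_prefix (hd : ∀ j, 2 ≤ d j) (hHh : ∀ w x, |H w x - h x| ≤ B)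
    (hH : ∀ w x, H (fun i => w (i + 1)) (g (w 0) x) = d (w 0) * H w x) (w : ℕ → ι) (x : X) :
    Tendsto (fun n => h (applyWord g n (fun i => w i) x) / ∏ i : Fin n, d (w i)) atTop
      (𝓝 (H w x)) :=
  tendsto_of_abs_sub_le_div_two_pow fun n => abs_div_prod_prefix_sub_le hd hHh hH n w x

end Sequences

section Cylinders

variable [MeasurableSpace ι]

def IsInfiniteProduct (μ : Measure (ℕ → ι)) (ν : Measure ι) : Prop :=
  ∀ (F : Finset ℕ) (s : ℕ → Set ι), μ {w | ∀ i ∈ F, w i ∈ s i} = ∏ i ∈ F, ν (s i)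

variable {μ : Measure (ℕ → ι)} {ν : Measure ι}

theorem IsInfiniteProduct.measure_prefix_eq (hμ : IsInfiniteProduct μ ν) (n : ℕ)
    (v : Fin n → ι) : μ ((fun (w : ℕ → ι) (i : Fin n) => w i) ⁻¹' {v}) = ∏ i, ν {v i} := by
  classical
  let s : ℕ → Set ι := fun m => if hm : m < n then {v ⟨m, hm⟩} else Set.univ
  have hset : (fun (w : ℕ → ι) (i : Fin n) => w i) ⁻¹' {v}
      = {w | ∀ m ∈ (Finset.univ : Finset (Fin n)).map Fin.valEmbedding, w m ∈ s m} := by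
    ext w; simp +contextual [s, funext_iff, Fin.forall_iff]
  rw [hset, hμ, Finset.prod_map]
  simp [s]

theorem measurable_prefix (n : ℕ) : Measurable fun (w : ℕ → ι) (i : Fin n) => w i :=
  measurable_pi_lambda _ fun i => measurable_pi_apply (i : ℕ)

theorem IsInfiniteProduct.integral_comp_prefix [Fintype ι] [MeasurableSingletonClass ι]
    [IsFiniteMeasure μ] (hμ : IsInfiniteProduct μ ν) (n : ℕ) (φ : (Fin n → ι) → ℝ) :
    ∫ w, φ (fun i => w i) ∂μ = ∑ v, (∏ i, ν.real {v i}) * φ v := by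
  rw [← integral_map (measurable_prefix n).aemeasurable
    Measurable.of_discrete.aestronglyMeasurable, integral_fintype (Integrable.of_finite)]
  refine Finset.sum_congr rfl fun v _ => ?_
  rw [map_measureReal_apply (measurable_prefix n) (measurableSet_singleton v), measureReal_def,
    hμ.measure_prefix_eq, ENNReal.toReal_prod, smul_eq_mul]
  rfl

end Cylinders

section Integral

variable [Fintype ι] [MeasurableSpace ι] [MeasurableSingletonClass ι] {μ : Measure (ℕ → ι)}
  {g : ι → X → X} {d : ι → ℝ} {H : (ℕ → ι) → X → ℝ} {h : X → ℝ} {B : ℝ}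

theorem measurable_div_prod_prefix (g : ι → X → X) (d : ι → ℝ) (h : X → ℝ) (n : ℕ) (x : X) :
    Measurable fun w : ℕ → ι => h (applyWord g n (fun i => w i) x) / ∏ i : Fin n, d (w i) :=
  (Measurable.of_discrete (f := fun v : Fin n → ι => h (applyWord g n v x) / ∏ i, d (v i))).comp
    (measurable_prefix n)

theorem integrable_of_abs_sub_le_of_shift [IsFiniteMeasure μ] (hd : ∀ j, 2 ≤ d j)
    (hHh : ∀ w x, |H w x - h x| ≤ B)
    (hH : ∀ w x, H (fun i => w (i + 1)) (g (w 0) x) = d (w 0) * H w x) (x : X) :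
    Integrable (fun w => H w x) μ := by
  refine Integrable.of_bound (aestronglyMeasurable_of_tendsto_ae atTop
    (fun n => (measurable_div_prod_prefix g d h n x).aestronglyMeasurable)
    (ae_of_all _ fun w => tendsto_div_prod_prefix hd hHh hH w x)) (|h x| + B)
    (ae_of_all _ fun w => ?_)
  rw [Real.norm_eq_abs]
  linarith [abs_sub_abs_le_abs_sub (H w x) (h x), hHh w x]

theorem IsInfiniteProduct.tendsto_sum_applyWord_div_pow_integral {ν : Measure ι}
    [IsFiniteMeasure μ] (hμ : IsInfiniteProduct μ ν) {D : ℝ} (hν : ∀ j, ν.real {j} = d j / D)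
    (hd : ∀ j, 2 ≤ d j) (hHh : ∀ w x, |H w x - h x| ≤ B)
    (hH : ∀ w x, H (fun i => w (i + 1)) (g (w 0) x) = d (w 0) * H w x) (x : X) :
    Tendsto (fun n => (∑ v : Fin n → ι, h (applyWord g n v x)) / D ^ n) atTop
      (𝓝 (∫ w, H w x ∂μ)) := by
  have hintegral : ∀ n, ∫ w, h (applyWord g n (fun i => w i) x) / ∏ i : Fin n, d (w i) ∂μ
      = (∑ v : Fin n → ι, h (applyWord g n v x)) / D ^ n := by
    intro n
    rw [hμ.integral_comp_prefix n fun v => h (applyWord g n v x) / ∏ i, d (v i), Finset.sum_div]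
    refine Finset.sum_congr rfl fun v _ => ?_
    have hP : ∏ i, d (v i) ≠ 0 := Finset.prod_ne_zero_iff.2 fun i _ => by linarith [hd (v i)]
    simp only [hν, Finset.prod_div_distrib, Finset.prod_const, Finset.card_univ, Fintype.card_fin]
    rw [div_mul_div_comm, mul_comm (D ^ n), mul_div_mul_left _ _ hP]
  refine (tendsto_integral_of_dominated_convergence (fun _ => |h x| + 2 * B)
    (fun n => (measurable_div_prod_prefix g d h n x).aestronglyMeasurable) (integrable_const _)
    (fun n => ae_of_all _ fun w => ?_)
    (ae_of_all _ fun w => tendsto_div_prod_prefix hd hHh hH w x)).congr hintegral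
  have h2n : B / 2 ^ n ≤ B :=
    div_le_self ((abs_nonneg _).trans (hHh w x)) (one_le_pow₀ one_le_two)
  rw [Real.norm_eq_abs]
  linarith [abs_sub_abs_le_abs_sub (h (applyWord g n (fun i => w i) x) / ∏ i : Fin n, d (w i))
    (h x), abs_sub_le (h (applyWord g n (fun i => w i) x) / ∏ i : Fin n, d (w i)) (H w x) (h x),
    abs_div_prod_prefix_sub_le hd hHh hH n w x, hHh w x]

end Integral

end

theorem canonical_height_integral_formula_general {X : Type*} (k : ℕ) (hk : 0 < k)
    (h : X → ℝ) (g : Fin k → X → X) (d : Fin k → ℕ) (hd : ∀ j, 2 ≤ d j)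
    (c : ℝ)
    (ν : Measure (Fin k))
    (hν : ∀ j : Fin k, ν {j} = ENNReal.ofReal ((d j : ℝ) / ∑ i, (d i : ℝ)))
    (μ : Measure (ℕ → Fin k)) [IsProbabilityMeasure μ]
    (hμ : ∀ (F : Finset ℕ) (s : ℕ → Set (Fin k)),
      μ {w | ∀ i ∈ F, w i ∈ s i} = ∏ i ∈ F, ν (s i))
    (Hw : (ℕ → Fin k) → X → ℝ)
    (hHw1 : ∀ w (x : X), |Hw w x - h x| ≤ 2 * c)
    (hHw2 : ∀ w (x : X), Hw (fun i => w (i + 1)) (g (w 0) x) = (d (w 0) : ℝ) * Hw w x)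
    (HH : X → ℝ)
    (hHHbd : ∃ C : ℝ, ∀ x : X, |HH x - h x| ≤ C)
    (hHHfe : ∀ x : X, ∑ j, HH (g j x) = (∑ j, (d j : ℝ)) * HH x) :
    (∀ x : X, HH x = ∫ w, Hw w x ∂μ) ∧ ∀ x : X, |HH x - h x| ≤ 4 * c := by
  have : Nonempty (Fin k) := Fin.pos_iff_nonempty.1 hk
  obtain ⟨C, hC⟩ := hHHbd
  have hd' : ∀ j, (2 : ℝ) ≤ d j := fun j => by exact_mod_cast hd j
  have hD : 2 * Fintype.card (Fin k) ≤ ∑ j, (d j : ℝ) := by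
    simpa [mul_comm] using Finset.card_nsmul_le_sum Finset.univ _ _ fun j _ => hd' j
  have hνD : ∀ j, ν.real {j} = d j / ∑ i, (d i : ℝ) := fun j => by
    rw [measureReal_def, hν, ENNReal.toReal_ofReal (by positivity)]
  have integral_eq : ∀ x, HH x = ∫ w, Hw w x ∂μ := fun x =>
    tendsto_nhds_unique
      (tendsto_of_abs_sub_le_div_two_pow (abs_sum_applyWord_div_pow_sub_le g hD hC hHHfe · x))
      (IsInfiniteProduct.tendsto_sum_applyWord_div_pow_integral hμ hνD hd' hHw1 hHw2 x)
  refine ⟨integral_eq, fun x => ?_⟩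
  have hc : 0 ≤ c := by linarith [(abs_nonneg _).trans (hHw1 (fun _ => ⟨0, hk⟩) x)]
  rw [integral_eq x]
  have hint := integrable_of_abs_sub_le_of_shift (μ := μ) hd' hHw1 hHw2 x
  linarith [abs_integral_sub_le hint (hHw1 · x)]

/-- Kawaguchi's integral formula: let `ν` assign mass `d_j/(d₁+...+d_k)` to `j ∈ {1,...,k}`
and let `μ = ∏ ν` be the product measure on `W = J^∞` (characterized on cylinders).
Then the canonical height `ĥ_H` of the dynamical eigensystem (characterized by
`ĥ_H = h + O(1)` and `Σ_j ĥ_H∘g_j = (Σ_j d_j)·ĥ_H`) satisfies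
`ĥ_H(x) = ∫_W ĥ_{f_w}(x) dμ(w)`; in particular `|ĥ_H(x) − h(x)| ≤ 4c`. -/
theorem canonical_height_integral_formula {X : Type*} (k : ℕ) (hk : 0 < k)
    (h : X → ℝ) (g : Fin k → X → X) (d : Fin k → ℕ) (hd : ∀ j, 2 ≤ d j)
    (c : ℝ) (hc : ∀ j (x : X), |h (g j x) / (d j : ℝ) - h x| ≤ c)
    (ν : Measure (Fin k))
    (hν : ∀ j : Fin k, ν {j} = ENNReal.ofReal ((d j : ℝ) / ∑ i, (d i : ℝ)))
    (μ : Measure (ℕ → Fin k)) [IsProbabilityMeasure μ]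
    (hμ : ∀ (F : Finset ℕ) (s : ℕ → Set (Fin k)),
      μ {w | ∀ i ∈ F, w i ∈ s i} = ∏ i ∈ F, ν (s i))
    (Hw : (ℕ → Fin k) → X → ℝ)
    (hHw1 : ∀ w (x : X), |Hw w x - h x| ≤ 2 * c)
    (hHw2 : ∀ w (x : X), Hw (fun i => w (i + 1)) (g (w 0) x) = (d (w 0) : ℝ) * Hw w x)
    (HH : X → ℝ)
    (hHHbd : ∃ C : ℝ, ∀ x : X, |HH x - h x| ≤ C)
    (hHHfe : ∀ x : X, ∑ j, HH (g j x) = (∑ j, (d j : ℝ)) * HH x) :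
    (∀ x : X, HH x = ∫ w, Hw w x ∂μ) ∧ ∀ x : X, |HH x - h x| ≤ 4 * c :=
  canonical_height_integral_formula_general k hk h g d hd c ν hν μ hμ Hw hHw1 hHw2 HH hHHbd hHHfe
end

section
/- Let F = {φ₁,...,φ_k} be rational self-maps of P¹ over K of degrees d_j ≥ 2. There exist constants c₁, c₂, c₃, c₄ depending only on d₁,...,d_k such that for every sequence Φ_w of maps from F and every P ∈ P¹(K̄): (i) |ĥ_{Φ_w}(P) − h(P)| ≤ c₁·h(F) + c₂, and (ii) |ĥ_F(P) − ĥ_{Φ_w}(P)| ≤ c₃·h(F) + c₄, where h(F) = max_j h(φ_j). -/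
open scoped BigOperators

lemma iter_bound {Y : Type} (f : Y → ℝ) (B C : ℝ)
    (hC : ∀ y, |f y| ≤ C)
    (hstep : ∀ C', (∀ y, |f y| ≤ C') → ∀ y, |f y| ≤ (C' + B) / 2) :
    ∀ y, |f y| ≤ B := by
  have key : ∀ n : ℕ, ∀ y, |f y| ≤ B + (max C B - B) / 2 ^ n := by
    intro n
    induction n with
    | zero =>
      intro y
      have e : B + (max C B - B) / 2 ^ (0:ℕ) = max C B := by norm_num
      rw [e]
      exact (hC y).trans (le_max_left C B)
    | succ n ih =>
      intro y
      have h2 := hstep _ ih y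
      have e : (B + (max C B - B) / 2 ^ n + B) / 2 = B + (max C B - B) / 2 ^ (n + 1) := by
        ring
      linarith [h2, e.le]
  intro y
  have h0 : Filter.Tendsto (fun n : ℕ => ((1:ℝ)/2) ^ n) Filter.atTop (nhds 0) :=
    tendsto_pow_atTop_nhds_zero_of_lt_one (by norm_num) (by norm_num)
  have htend : Filter.Tendsto (fun n : ℕ => B + (max C B - B) / 2 ^ n)
      Filter.atTop (nhds B) := by
    have : (fun n : ℕ => B + (max C B - B) / 2 ^ n)
        = fun n : ℕ => B + (max C B - B) * ((1:ℝ)/2) ^ n := by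
      funext n; rw [one_div, inv_pow, div_eq_mul_inv]
    rw [this]
    simpa using Filter.Tendsto.add (tendsto_const_nhds (x := B)) (h0.const_mul (max C B - B))
  exact ge_of_tendsto' htend (fun n => key n y)


/-- For a system `F = {φ₁,...,φ_k}` of rational self-maps of `ℙ¹` of degrees `d_j ≥ 2`,
there are constants `c₁, c₂, c₃, c₄` depending only on the degrees (and on the universal
Weil-height constants `α, β` of Lemma 3.7) such that for every sequence `Φ_w` of maps
from `F` and every point `P`:
(i) `|ĥ_{Φ_w}(P) − h(P)| ≤ c₁·h(F) + c₂`, and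
(ii) `|ĥ_F(P) − ĥ_{Φ_w}(P)| ≤ c₃·h(F) + c₄`, where `h(F) = max_j h(φ_j)`.
Here the canonical heights are characterized by boundedness and their functional
equations, and the Weil height machine gives `|h(φ_j x) − d_j h(x)| ≤ α·h(φ_j) + β`. -/
theorem canonical_heights_close_to_height (k : ℕ) (hk : 0 < k)
    (dd : Fin k → ℕ) (hdd : ∀ j, 2 ≤ dd j) (α β : ℝ) :
    ∃ c₁ c₂ c₃ c₄ : ℝ,
      ∀ (X : Type) (h : X → ℝ) (φ : Fin k → X → X) (hφ : Fin k → ℝ) (hF : ℝ),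
        (∀ j, 0 ≤ hφ j) → (∀ j, hφ j ≤ hF) → (∃ j, hφ j = hF) →
        (∀ j (x : X), |h (φ j x) - (dd j : ℝ) * h x| ≤ α * hφ j + β) →
        ∀ (Hw : (ℕ → Fin k) → X → ℝ),
          (∃ C : ℝ, ∀ w (x : X), |Hw w x - h x| ≤ C) →
          (∀ w (x : X), Hw (fun i => w (i + 1)) (φ (w 0) x) = (dd (w 0) : ℝ) * Hw w x) →
          ∀ (HF : X → ℝ),
            (∃ C : ℝ, ∀ x : X, |HF x - h x| ≤ C) →
            (∀ x : X, ∑ j, HF (φ j x) = (∑ j, (dd j : ℝ)) * HF x) →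
            ∀ (w : ℕ → Fin k) (P : X),
              |Hw w P - h P| ≤ c₁ * hF + c₂ ∧ |HF P - Hw w P| ≤ c₃ * hF + c₄ := by
  refine ⟨|α|, β, 2 * |α|, 2 * β, ?_⟩
  intro X h φ hφ hF hφ0 hφF hFex hbound Hw hCw hfe HF hCF hfeF w P
  obtain ⟨Cw, hCw⟩ := hCw
  obtain ⟨CF, hCF⟩ := hCF
  set B : ℝ := |α| * hF + β with hBdef
  -- the per-map bound is at most B
  have hBj : ∀ j, α * hφ j + β ≤ B := by
    intro j
    have h1 : α * hφ j ≤ |α| * hφ j :=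
      mul_le_mul_of_nonneg_right (le_abs_self α) (hφ0 j)
    have h2 : |α| * hφ j ≤ |α| * hF :=
      mul_le_mul_of_nonneg_left (hφF j) (abs_nonneg α)
    simp only [hBdef]; linarith
  have hbound' : ∀ j (x : X), |h (φ j x) - (dd j : ℝ) * h x| ≤ B :=
    fun j x => (hbound j x).trans (hBj j)
  have hB : 0 ≤ B := by
    obtain ⟨j, _⟩ := hFex
    exact (abs_nonneg _).trans (hbound' j P)
  -- degrees ≥ 2
  have hd2 : ∀ j, (2:ℝ) ≤ (dd j : ℝ) := by
    intro j; exact_mod_cast hdd j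
  -- Part (i): canonical height for sequences
  have part1 : ∀ (p : (ℕ → Fin k) × X), |Hw p.1 p.2 - h p.2| ≤ B := by
    apply iter_bound (fun p : (ℕ → Fin k) × X => Hw p.1 p.2 - h p.2) B Cw
    · intro p; exact hCw p.1 p.2
    · intro C' hC' p
      obtain ⟨w', x⟩ := p
      have hC'0 : 0 ≤ C' := (abs_nonneg _).trans (hC' (w', x))
      set d : ℝ := (dd (w' 0) : ℝ) with hddef
      have hd : (2:ℝ) ≤ d := hd2 (w' 0)
      have key : d * (Hw w' x - h x)
          = (Hw (fun i => w' (i + 1)) (φ (w' 0) x) - h (φ (w' 0) x))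
            + (h (φ (w' 0) x) - d * h x) := by
        have e := hfe w' x
        simp only [hddef]
        linarith [e]
      have hb1 := hC' ((fun i => w' (i + 1)), φ (w' 0) x)
      have hb2 := hbound' (w' 0) x
      have habs : |d * (Hw w' x - h x)| ≤ C' + B := by
        rw [key]
        exact (abs_add_le _ _).trans (by simp only [hddef] at hb1 hb2 ⊢; exact add_le_add hb1 hb2)
      rw [abs_mul, abs_of_nonneg (by linarith : (0:ℝ) ≤ d)] at habs
      have h3 : 2 * |Hw w' x - h x| ≤ d * |Hw w' x - h x| :=
        mul_le_mul_of_nonneg_right hd (abs_nonneg _)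
      have hgoal : |Hw w' x - h x| ≤ (C' + B) / 2 := by linarith
      exact hgoal
  -- Part (ii): canonical height for the system
  have part2 : ∀ x : X, |HF x - h x| ≤ B := by
    apply iter_bound (fun x : X => HF x - h x) B CF
    · exact hCF
    · intro C' hC' x
      have hC'0 : 0 ≤ C' := (abs_nonneg _).trans (hC' P)
      set D : ℝ := ∑ j, (dd j : ℝ) with hDdef
      have hD : 2 * (k:ℝ) ≤ D := by
        have : ∑ j : Fin k, (2:ℝ) ≤ ∑ j, (dd j : ℝ) :=
          Finset.sum_le_sum (fun j _ => hd2 j)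
        simpa [mul_comm] using this
      have hk' : (1:ℝ) ≤ (k:ℝ) := by exact_mod_cast hk
      have key : D * (HF x - h x)
          = (∑ j, (HF (φ j x) - h (φ j x))) + ∑ j, (h (φ j x) - (dd j : ℝ) * h x) := by
        have e := hfeF x
        calc D * (HF x - h x) = (∑ j, HF (φ j x)) - (∑ j, (dd j : ℝ)) * h x := by
              rw [e]; ring
          _ = ∑ j, (HF (φ j x) - (dd j : ℝ) * h x) := by
              rw [Finset.sum_sub_distrib, Finset.sum_mul]
          _ = ∑ j, ((HF (φ j x) - h (φ j x)) + (h (φ j x) - (dd j : ℝ) * h x)) := by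
              apply Finset.sum_congr rfl; intros; ring
          _ = _ := Finset.sum_add_distrib
      have hb1 : |∑ j, (HF (φ j x) - h (φ j x))| ≤ (k:ℝ) * C' := by
        refine (Finset.abs_sum_le_sum_abs _ _).trans ?_
        have := Finset.sum_le_sum (fun j (_ : j ∈ Finset.univ) => hC' (φ j x))
        simpa [Finset.sum_const, Finset.card_univ, nsmul_eq_mul] using this
      have hb2 : |∑ j, (h (φ j x) - (dd j : ℝ) * h x)| ≤ (k:ℝ) * B := by
        refine (Finset.abs_sum_le_sum_abs _ _).trans ?_
        have := Finset.sum_le_sum (fun j (_ : j ∈ Finset.univ) => hbound' j x)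
        simpa [Finset.sum_const, Finset.card_univ, nsmul_eq_mul] using this
      have habs : |D * (HF x - h x)| ≤ (k:ℝ) * (C' + B) := by
        rw [key]
        calc _ ≤ |∑ j, (HF (φ j x) - h (φ j x))| + |∑ j, (h (φ j x) - (dd j : ℝ) * h x)| :=
              abs_add_le _ _
          _ ≤ (k:ℝ) * C' + (k:ℝ) * B := add_le_add hb1 hb2
          _ = (k:ℝ) * (C' + B) := by ring
      have hD0 : (0:ℝ) < D := by linarith
      rw [abs_mul, abs_of_nonneg hD0.le] at habs
      have h3 : 2 * (k:ℝ) * |HF x - h x| ≤ D * |HF x - h x| :=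
        mul_le_mul_of_nonneg_right hD (abs_nonneg _)
      have hgoal : |HF x - h x| ≤ (C' + B) / 2 := by
        nlinarith [abs_nonneg (HF x - h x)]
      exact hgoal
  refine ⟨part1 (w, P), ?_⟩
  have h1 := part2 P
  have h2 := part1 (w, P)
  calc |HF P - Hw w P| ≤ |HF P - h P| + |h P - Hw w P| := by
        have e : HF P - Hw w P = (HF P - h P) + (h P - Hw w P) := by ring
        rw [e]; exact abs_add_le _ _
    _ ≤ B + B := by rw [abs_sub_comm (h P)]; exact add_le_add h1 h2
    _ = 2 * |α| * hF + 2 * β := by rw [hBdef]; ring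
end
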